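/- arXiv:2004.08448 — 4 statements merged into one kernel-verified Lean document; each statement's English description precedes it below -/
import Mathlib

section
/- Let (X,d,ν) be a metric measure space with ν a doubling measure (with doubling constant c_D), let p ∈ (1,∞), and let f, g ∈ L^p(X,ν) satisfy the Hajlasz inequality |f(x) − f(y)| ≤ d(x,y)(g(x) + g(y)) for ν-a.e. x,y ∈ X. Then for every r > 0, (1/r^p) ∫_X (1/ν(B(x,r))) ∫_{B(x,r)} |f(y) − f(x)|^p dν(y) dν(x) ≤ 2^{p-1}(1 + c_D) ∫_X g^p dν (in particular the left-hand side is bounded uniformly in r by a constant times ‖g‖_{L^p}^p). -/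
/-!
On `B(x, r)` the Hajłasz inequality and convexity give
`|f y - f x| ^ p ≤ r ^ p 2 ^ (p - 1) (g x ^ p + g y ^ p)`, so the ball average of `|f - f x| ^ p`
is at most `r ^ p 2 ^ (p - 1) (g x ^ p + ⨍_{B(x,r)} g ^ p)`. After integrating in `x`, Tonelli and
the symmetry of `dist x y < r` turn the second term into
`∫ g(y) ^ p ∫_{B(y,r)} ν(B(x,r))⁻¹ dx dy`, and `ν(B(y,r)) ≤ ν(B(x,2r)) ≤ c_D ν(B(x,r))` bounds the
inner integral by `c_D`.

Tonelli needs `{(x, y) | dist x y < r}` to be measurable for the product σ-algebra. This holds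
because the space is separable: under a σ-finite measure charging every ball, an `ε`-separated set
is countable, and a maximal one is `ε`-dense.
-/

open MeasureTheory Metric Set Function
open scoped ENNReal

section Averages

variable {α : Type*} [MeasurableSpace α] {μ : Measure α}

lemma integral_le_toReal_lintegral_ofReal {f : α → ℝ} (hf : ∀ x, 0 ≤ f x) :
    ∫ x, f x ∂μ ≤ (∫⁻ x, ENNReal.ofReal (f x) ∂μ).toReal := by
  refine (le_abs_self _).trans ?_
  simpa only [Real.norm_eq_abs, abs_of_nonneg (hf _)] using norm_integral_le_lintegral_norm f

lemma ofReal_integral_le_lintegral_ofReal {f : α → ℝ} (hf : ∀ x, 0 ≤ f x) :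
    ENNReal.ofReal (∫ x, f x ∂μ) ≤ ∫⁻ x, ENNReal.ofReal (f x) ∂μ :=
  ENNReal.ofReal_le_of_le_toReal (integral_le_toReal_lintegral_ofReal hf)

lemma ofReal_average_le_laverage {f : α → ℝ} (hf : ∀ x, 0 ≤ f x) :
    ENNReal.ofReal (⨍ x, f x ∂μ) ≤ ⨍⁻ x, ENNReal.ofReal (f x) ∂μ :=
  ofReal_integral_le_lintegral_ofReal hf

lemma integral_setAverage_le_toReal_of_lintegral_le {β : Type*} [MeasurableSpace β]
    {ν : Measure β} {F : α → β → ℝ} (hF : ∀ x y, 0 ≤ F x y) {s : α → Set β} {B : ℝ≥0∞}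
    (hB : B ≠ ∞) (h : ∫⁻ x, ⨍⁻ y in s x, ENNReal.ofReal (F x y) ∂ν ∂μ ≤ B) :
    ∫ x, ⨍ y in s x, F x y ∂ν ∂μ ≤ B.toReal := by
  refine (integral_le_toReal_lintegral_ofReal fun x => integral_nonneg (hF x)).trans ?_
  exact ENNReal.toReal_mono hB ((lintegral_mono fun x => ofReal_average_le_laverage (hF x)).trans h)

lemma laverage_const_le (c : ℝ≥0∞) : ⨍⁻ _x, c ∂μ ≤ c := by
  rw [laverage_eq, lintegral_const, mul_div_assoc]
  exact mul_le_of_le_one_right' ENNReal.div_self_le_one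

lemma integral_rpow_eq_toReal_lintegral {g : α → ℝ} (hg : AEMeasurable g μ) (hg₀ : ∀ x, 0 ≤ g x)
    {p : ℝ} (hp : 0 ≤ p) : ∫ x, g x ^ p ∂μ = (∫⁻ x, ENNReal.ofReal (g x) ^ p ∂μ).toReal := by
  rw [integral_eq_lintegral_of_nonneg_ae (ae_of_all _ fun x => Real.rpow_nonneg (hg₀ x) p)
    (hg.pow_const p).aestronglyMeasurable]
  simp_rw [ENNReal.ofReal_rpow_of_nonneg (hg₀ _) hp]

lemma MeasureTheory.MemLp.lintegral_ofReal_rpow_ne_top {g : α → ℝ} {p : ℝ}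
    (hg : MemLp g (ENNReal.ofReal p) μ) (hg₀ : ∀ x, 0 ≤ g x) (hp : 0 < p) :
    ∫⁻ x, ENNReal.ofReal (g x) ^ p ∂μ ≠ ∞ := by
  simpa [Real.enorm_eq_ofReal (hg₀ _), hp.le] using
    (lintegral_rpow_enorm_lt_top_of_eLpNorm_lt_top (by simpa using hp) (by simp)
      hg.eLpNorm_lt_top).ne

end Averages

lemma ofReal_abs_rpow_le_of_abs_le_mul_add {t r u v p : ℝ} (hp : 1 ≤ p) (hu : 0 ≤ u) (hv : 0 ≤ v)
    (ht : |t| ≤ r * (u + v)) :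
    ENNReal.ofReal (|t| ^ p) ≤
      ENNReal.ofReal r ^ p * 2 ^ (p - 1) * (ENNReal.ofReal u ^ p + ENNReal.ofReal v ^ p) := by
  have hp₀ : 0 ≤ p := by linarith
  calc ENNReal.ofReal (|t| ^ p) = ENNReal.ofReal |t| ^ p :=
        (ENNReal.ofReal_rpow_of_nonneg (abs_nonneg t) hp₀).symm
    _ ≤ ENNReal.ofReal (r * (u + v)) ^ p := by gcongr
    _ = ENNReal.ofReal r ^ p * (ENNReal.ofReal u + ENNReal.ofReal v) ^ p := by
        rw [ENNReal.ofReal_mul' (add_nonneg hu hv), ENNReal.ofReal_add hu hv,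
          ENNReal.mul_rpow_of_nonneg _ _ hp₀]
    _ ≤ ENNReal.ofReal r ^ p * (2 ^ (p - 1) * (ENNReal.ofReal u ^ p + ENNReal.ofReal v ^ p)) := by
        gcongr
        exact ENNReal.rpow_add_le_mul_rpow_add_rpow _ _ hp
    _ = _ := (mul_assoc ..).symm

section MetricMeasureSpace

variable {X : Type*} [MetricSpace X] [MeasurableSpace X] {ν : Measure X}

lemma sigmaFinite_of_measure_ball_ne_top [Nonempty X]
    (h : ∀ x (R : ℝ), 0 < R → ν (ball x R) ≠ ∞) : SigmaFinite ν := by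
  obtain ⟨x₀⟩ := ‹Nonempty X›
  refine Measure.sigmaFinite_of_countable (countable_range fun n : ℕ => ball x₀ (n + 1)) ?_ ?_
  · rintro _ ⟨n, rfl⟩
    exact (h x₀ _ n.cast_add_one_pos).lt_top
  · rw [sUnion_range, iUnion_ball_nat_succ]

lemma ne_zero_of_measure_ball_two_mul_le [Nonempty X] {c : ℝ≥0∞}
    (hpos : ∀ x (R : ℝ), 0 < R → ν (ball x R) ≠ 0)
    (hdb : ∀ x (R : ℝ), 0 < R → ν (ball x (2 * R)) ≤ c * ν (ball x R)) : c ≠ 0 := by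
  rintro rfl
  obtain ⟨x⟩ := ‹Nonempty X›
  refine hpos x 1 one_pos (le_antisymm ?_ zero_le)
  simpa using (measure_mono (ball_subset_ball (by norm_num : (1 : ℝ) ≤ 2 * 1))).trans
    (hdb x 1 one_pos)

lemma inv_measure_ball_le_mul_inv {c : ℝ≥0∞} {r : ℝ} {x y : X} (hxy : dist x y < r)
    (hdb : ν (ball x (2 * r)) ≤ c * ν (ball x r)) (hy₀ : ν (ball y r) ≠ 0)
    (hy : ν (ball y r) ≠ ∞) : (ν (ball x r))⁻¹ ≤ c * (ν (ball y r))⁻¹ := by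
  have hyx : ν (ball y r) ≤ c * ν (ball x r) :=
    (measure_mono (ball_subset_ball' (by linarith [dist_comm x y]))).trans hdb
  calc (ν (ball x r))⁻¹ = (ν (ball y r))⁻¹ * ν (ball y r) * (ν (ball x r))⁻¹ := by
        rw [ENNReal.inv_mul_cancel hy₀ hy, one_mul]
    _ ≤ (ν (ball y r))⁻¹ * (c * ν (ball x r)) * (ν (ball x r))⁻¹ := by gcongr
    _ = c * (ν (ball y r))⁻¹ * (ν (ball x r) * (ν (ball x r))⁻¹) := by ring
    _ ≤ c * (ν (ball y r))⁻¹ := mul_le_of_le_one_right' (ENNReal.mul_inv_le_one _)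

variable [OpensMeasurableSpace X]

lemma countable_of_pairwise_lt_dist [SFinite ν] (hpos : ∀ x (R : ℝ), 0 < R → ν (ball x R) ≠ 0)
    {ε : ℝ} (hε : 0 < ε) {s : Set X} (hs : s.Pairwise fun x y => ε < dist x y) : s.Countable := by
  have hdisj : Pairwise (Disjoint on fun x : s => ball (x : X) (ε / 2)) := by
    intro x y hxy
    refine ball_disjoint_ball ?_
    linarith [hs x.2 y.2 (Subtype.coe_ne_coe.2 hxy)]
  have := Measure.countable_meas_pos_of_disjoint_iUnion (μ := ν) (fun _ => measurableSet_ball) hdisj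
  simp only [pos_iff_ne_zero, hpos _ _ (half_pos hε), ne_eq, not_false_eq_true, ofPred_true] at this
  exact countable_coe_iff.1 (countable_univ_iff.1 this)

lemma secondCountableTopology_of_measure_ball_ne_zero [SFinite ν]
    (hpos : ∀ x (R : ℝ), 0 < R → ν (ball x R) ≠ 0) : SecondCountableTopology X := by
  refine secondCountable_of_almost_dense_set fun ε hε => ?_
  obtain ⟨s, hs⟩ := zorn_subset {s : Set X | s.Pairwise fun x y => ε < dist x y} fun c hc hchain =>
    ⟨⋃₀ c, (pairwise_sUnion hchain.directedOn).2 hc, fun _ => subset_sUnion_of_mem⟩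
  refine ⟨s, countable_of_pairwise_lt_dist hpos hε hs.prop, fun x => ?_⟩
  by_contra! hfar
  have hx : x ∈ s := hs.mem_of_prop_insert <|
    hs.prop.insert fun y hy _ => ⟨hfar y hy, dist_comm x y ▸ hfar y hy⟩
  linarith [hfar x hx, dist_self x]

lemma setLAverage_ofReal_abs_sub_rpow_le {f g : X → ℝ} {p r : ℝ} (hp : 1 ≤ p)
    (hg : ∀ x, 0 ≤ g x) {x : X} (hx : ∀ᵐ y ∂ν, |f x - f y| ≤ dist x y * (g x + g y)) :
    ⨍⁻ y in ball x r, ENNReal.ofReal (|f y - f x| ^ p) ∂ν ≤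
      ENNReal.ofReal r ^ p * 2 ^ (p - 1) *
        (ENNReal.ofReal (g x) ^ p + ⨍⁻ y in ball x r, ENNReal.ofReal (g y) ^ p ∂ν) := by
  set K : ℝ≥0∞ := ENNReal.ofReal r ^ p * 2 ^ (p - 1)
  have hK : K ≠ ∞ := by
    have : 0 ≤ p - 1 := by linarith
    have : 0 ≤ p := by linarith
    finiteness
  have hbound : ∀ᵐ y ∂ν.restrict (ball x r), ENNReal.ofReal (|f y - f x| ^ p) ≤
      K * (ENNReal.ofReal (g x) ^ p + ENNReal.ofReal (g y) ^ p) := by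
    filter_upwards [ae_restrict_of_ae hx, ae_restrict_mem measurableSet_ball] with y hxy hy
    refine ofReal_abs_rpow_le_of_abs_le_mul_add hp (hg x) (hg y) ?_
    rw [abs_sub_comm]
    refine hxy.trans ?_
    gcongr
    · exact add_nonneg (hg x) (hg y)
    · exact (dist_comm x y ▸ mem_ball.1 hy).le
  calc _ ≤ ⨍⁻ y in ball x r, K * (ENNReal.ofReal (g x) ^ p + ENNReal.ofReal (g y) ^ p) ∂ν :=
        laverage_mono_ae hbound
    _ = K * (⨍⁻ _y in ball x r, ENNReal.ofReal (g x) ^ p ∂ν +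
          ⨍⁻ y in ball x r, ENNReal.ofReal (g y) ^ p ∂ν) := by
        simp only [laverage_eq']
        rw [lintegral_const_mul' _ _ hK, lintegral_add_left measurable_const]
    _ ≤ _ := by gcongr; exact laverage_const_le _

variable [SecondCountableTopology X] [SFinite ν]

lemma measurableSet_setOf_dist_lt (r : ℝ) : MeasurableSet {z : X × X | dist z.2 z.1 < r} :=
  measurableSet_lt (measurable_snd.dist measurable_fst) measurable_const

lemma measurable_measure_ball (r : ℝ) : Measurable fun x => ν (ball x r) :=
  measurable_measure_prodMk_left (measurableSet_setOf_dist_lt r)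

lemma lintegral_setLIntegral_ball_comm {F : X → X → ℝ≥0∞}
    (hF : AEMeasurable (uncurry F) (ν.prod ν)) (r : ℝ) :
    ∫⁻ x, ∫⁻ y in ball x r, F x y ∂ν ∂ν = ∫⁻ y, ∫⁻ x in ball y r, F x y ∂ν ∂ν := by
  set S : Set (X × X) := {z | dist z.2 z.1 < r}
  have h₁ : ∀ x, ∫⁻ y in ball x r, F x y ∂ν = ∫⁻ y, S.indicator (uncurry F) (x, y) ∂ν := by
    intro x
    rw [← lintegral_indicator measurableSet_ball]
    rfl
  have h₂ : ∀ y, ∫⁻ x in ball y r, F x y ∂ν = ∫⁻ x, S.indicator (uncurry F) (x, y) ∂ν := by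
    intro y
    rw [← lintegral_indicator measurableSet_ball]
    congr 1 with x
    simp [S, indicator, mem_ball, dist_comm]
  simp_rw [h₁, h₂]
  exact lintegral_lintegral_swap (hF.indicator (measurableSet_setOf_dist_lt r))

theorem lintegral_setLAverage_ball_le {c : ℝ≥0∞} {r : ℝ}
    (hdb : ∀ x, ν (ball x (2 * r)) ≤ c * ν (ball x r)) (hpos : ∀ x, ν (ball x r) ≠ 0)
    (hfin : ∀ x, ν (ball x r) ≠ ∞) {h : X → ℝ≥0∞} (hh : AEMeasurable h ν) :
    ∫⁻ x, ⨍⁻ y in ball x r, h y ∂ν ∂ν ≤ c * ∫⁻ x, h x ∂ν := by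
  have hA : Measurable fun x => (ν (ball x r))⁻¹ := (measurable_measure_ball r).inv
  have hinner : ∀ y, ∫⁻ x in ball y r, (ν (ball x r))⁻¹ ∂ν ≤ c := fun y =>
    calc ∫⁻ x in ball y r, (ν (ball x r))⁻¹ ∂ν ≤ ∫⁻ _x in ball y r, c * (ν (ball y r))⁻¹ ∂ν :=
          setLIntegral_mono' measurableSet_ball fun x hx =>
            inv_measure_ball_le_mul_inv (mem_ball.1 hx) (hdb x) (hpos y) (hfin y)
      _ = c * ((ν (ball y r))⁻¹ * ν (ball y r)) := by rw [setLIntegral_const, mul_assoc]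
      _ ≤ c := mul_le_of_le_one_right' (ENNReal.inv_mul_le_one _)
  calc ∫⁻ x, ⨍⁻ y in ball x r, h y ∂ν ∂ν
      = ∫⁻ x, ∫⁻ y in ball x r, (ν (ball x r))⁻¹ * h y ∂ν ∂ν := by
        congr 1 with x
        rw [setLAverage_eq, ENNReal.div_eq_inv_mul, lintegral_const_mul'' _ hh.restrict]
    _ = ∫⁻ y, ∫⁻ x in ball y r, (ν (ball x r))⁻¹ * h y ∂ν ∂ν :=
        lintegral_setLIntegral_ball_comm ((hA.comp measurable_fst).aemeasurable.mul hh.comp_snd) r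
    _ = ∫⁻ y, (∫⁻ x in ball y r, (ν (ball x r))⁻¹ ∂ν) * h y ∂ν := by
        congr 1 with y
        exact lintegral_mul_const _ hA
    _ ≤ ∫⁻ y, c * h y ∂ν := lintegral_mono fun y => mul_le_mul_left (hinner y) _
    _ = c * ∫⁻ x, h x ∂ν := lintegral_const_mul'' c hh

theorem lintegral_setLAverage_ofReal_abs_sub_rpow_le {c : ℝ≥0∞} {r : ℝ}
    (hdb : ∀ x, ν (ball x (2 * r)) ≤ c * ν (ball x r)) (hpos : ∀ x, ν (ball x r) ≠ 0)
    (hfin : ∀ x, ν (ball x r) ≠ ∞) {f g : X → ℝ} {p : ℝ} (hp : 1 ≤ p) (hg : AEMeasurable g ν)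
    (hg₀ : ∀ x, 0 ≤ g x)
    (hajlasz : ∀ᵐ z ∂ν.prod ν, |f z.1 - f z.2| ≤ dist z.1 z.2 * (g z.1 + g z.2)) :
    ∫⁻ x, ⨍⁻ y in ball x r, ENNReal.ofReal (|f y - f x| ^ p) ∂ν ∂ν ≤
      ENNReal.ofReal r ^ p * 2 ^ (p - 1) * (1 + c) * ∫⁻ x, ENNReal.ofReal (g x) ^ p ∂ν := by
  have hG : AEMeasurable (fun x => ENNReal.ofReal (g x) ^ p) ν :=
    (ENNReal.measurable_ofReal.comp_aemeasurable hg).pow_const p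
  calc ∫⁻ x, ⨍⁻ y in ball x r, ENNReal.ofReal (|f y - f x| ^ p) ∂ν ∂ν
      ≤ ∫⁻ x, ENNReal.ofReal r ^ p * 2 ^ (p - 1) *
          (ENNReal.ofReal (g x) ^ p + ⨍⁻ y in ball x r, ENNReal.ofReal (g y) ^ p ∂ν) ∂ν := by
        refine lintegral_mono_ae ?_
        filter_upwards [Measure.ae_ae_of_ae_prod hajlasz] with x hx
        exact setLAverage_ofReal_abs_sub_rpow_le hp hg₀ hx
    _ = ENNReal.ofReal r ^ p * 2 ^ (p - 1) * (∫⁻ x, ENNReal.ofReal (g x) ^ p ∂ν +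
          ∫⁻ x, ⨍⁻ y in ball x r, ENNReal.ofReal (g y) ^ p ∂ν ∂ν) := by
        have : 0 ≤ p - 1 := by linarith
        have : 0 ≤ p := by linarith
        rw [lintegral_const_mul' _ _ (by finiteness), lintegral_add_left' hG]
    _ ≤ ENNReal.ofReal r ^ p * 2 ^ (p - 1) * (∫⁻ x, ENNReal.ofReal (g x) ^ p ∂ν +
          c * ∫⁻ x, ENNReal.ofReal (g x) ^ p ∂ν) := by
        gcongr
        exact lintegral_setLAverage_ball_le hdb hpos hfin hG
    _ = _ := by ring

end MetricMeasureSpace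

theorem bbm_quotient_le_of_hajlasz_general
    {X : Type*} [MetricSpace X] [MeasurableSpace X] [OpensMeasurableSpace X]
    (ν : Measure X) (c_D : ℝ)
    (hdouble : ∀ (x : X) (r : ℝ), 0 < r →
      0 < ν (ball x r) ∧ ν (ball x (2 * r)) ≤ ENNReal.ofReal c_D * ν (ball x r) ∧
        ν (ball x (2 * r)) < ⊤)
    (p : ℝ) (hp : 1 < p) (f g : X → ℝ)
    (hg : MemLp g (ENNReal.ofReal p) ν)
    (hg0 : ∀ x, 0 ≤ g x)
    (hajlasz : ∀ᵐ z ∂(ν.prod ν), |f z.1 - f z.2| ≤ dist z.1 z.2 * (g z.1 + g z.2))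
    (r : ℝ) (hr : 0 < r) :
    (1 / r ^ p) *
        ∫ x, ((ν (ball x r)).toReal⁻¹ * ∫ y in ball x r, |f y - f x| ^ p ∂ν) ∂ν ≤
      2 ^ (p - 1) * (1 + c_D) * ∫ x, g x ^ p ∂ν := by
  rcases isEmpty_or_nonempty X with hX | hX
  · simp [Measure.eq_zero_of_isEmpty ν]
  have hpos : ∀ x (R : ℝ), 0 < R → ν (ball x R) ≠ 0 := fun x R hR => (hdouble x R hR).1.ne'
  have hfin : ∀ x (R : ℝ), 0 < R → ν (ball x R) ≠ ∞ := fun x R hR =>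
    ((measure_mono (ball_subset_ball (by linarith))).trans_lt (hdouble x R hR).2.2).ne
  have hc : 0 ≤ c_D := (ENNReal.ofReal_pos.1 <| pos_iff_ne_zero.2 <|
    ne_zero_of_measure_ball_two_mul_le hpos fun x R hR => (hdouble x R hR).2.1).le
  have := sigmaFinite_of_measure_ball_ne_top hfin
  have := secondCountableTopology_of_measure_ball_ne_zero hpos
  have hM := hg.lintegral_ofReal_rpow_ne_top hg0 (by linarith)
  have hp₁ : 0 ≤ p - 1 := by linarith
  have hbound := integral_setAverage_le_toReal_of_lintegral_le
    (fun x y => Real.rpow_nonneg (abs_nonneg (f y - f x)) p) (by finiteness)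
    (lintegral_setLAverage_ofReal_abs_sub_rpow_le (fun x => (hdouble x r hr).2.1)
      (hpos · r hr) (hfin · r hr) hp.le hg.aestronglyMeasurable.aemeasurable hg0 hajlasz)
  rw [integral_rpow_eq_toReal_lintegral hg.aestronglyMeasurable.aemeasurable hg0 (by linarith)]
  simp only [setAverage_eq, smul_eq_mul, measureReal_def, ENNReal.toReal_mul, ← ENNReal.toReal_rpow,
    ENNReal.toReal_add ENNReal.one_ne_top ENNReal.ofReal_ne_top, ENNReal.toReal_ofReal hr.le,
    ENNReal.toReal_ofReal hc, ENNReal.toReal_one, ENNReal.toReal_ofNat] at hbound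
  calc _ ≤ 1 / r ^ p * (r ^ p * 2 ^ (p - 1) * (1 + c_D) *
        (∫⁻ x, ENNReal.ofReal (g x) ^ p ∂ν).toReal) := by gcongr
    _ = _ := by field_simp

/-- Uniform bound on the BBM difference quotient for functions satisfying a Hajlasz-type
inequality, on a metric measure space with a doubling measure. -/
theorem bbm_quotient_le_of_hajlasz
    {X : Type*} [MetricSpace X] [MeasurableSpace X] [OpensMeasurableSpace X]
    (ν : Measure X) (c_D : ℝ)
    (hdouble : ∀ (x : X) (r : ℝ), 0 < r →
      0 < ν (ball x r) ∧ ν (ball x (2 * r)) ≤ ENNReal.ofReal c_D * ν (ball x r) ∧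
        ν (ball x (2 * r)) < ⊤)
    (p : ℝ) (hp : 1 < p) (f g : X → ℝ)
    (hf : MemLp f (ENNReal.ofReal p) ν) (hg : MemLp g (ENNReal.ofReal p) ν)
    (hg0 : ∀ x, 0 ≤ g x)
    (hajlasz : ∀ᵐ z ∂(ν.prod ν), |f z.1 - f z.2| ≤ dist z.1 z.2 * (g z.1 + g z.2))
    (r : ℝ) (hr : 0 < r) :
    (1 / r ^ p) *
        ∫ x, ((ν (ball x r)).toReal⁻¹ * ∫ y in ball x r, |f y - f x| ^ p ∂ν) ∂ν ≤
      2 ^ (p - 1) * (1 + c_D) * ∫ x, g x ^ p ∂ν :=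
  bbm_quotient_le_of_hajlasz_general ν c_D hdouble p hp f g hg hg0 hajlasz r hr
end

section
/- Let f : ℝ^N → ℝ be an L-Lipschitz function with f ∈ W^{1,p}(ℝ^N) for p ∈ (1,∞). Then lim_{r→0} (1/r^p) ∫_{ℝ^N} (1/ℒ^N(B(x,r))) ∫_{B(x,r)} |f(x) − f(y)|^p dℒ^N(y) dℒ^N(x) = C_{p,N} ∫_{ℝ^N} |∇f|^p dℒ^N, where C_{p,N} = (1/ℒ^N(B(0,1))) ∫_{B(0,1)} |z·e₁|^p dℒ^N(z). -/
/-!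
Along a segment, the fundamental theorem of calculus for Lipschitz functions and Jensen's
inequality give `|f (x + r w) - f x|^p ≤ |r|^p ∫₀¹ |Df(x + t r w) w|^p dt`; integrating in `x`
and using translation invariance bounds every rescaled energy by the limit energy
`∫ ⨍_{B(0,1)} |Df(x) w|^p dw dx`. At each point of differentiability (almost every point, by
Rademacher) the difference quotients converge by dominated convergence, so Fatou's lemma gives
the matching lower bound. Finally `⨍_{B(0,1)} |Df(x) w|^p dw = C_{p,N} ‖Df(x)‖^p` by rotation
invariance of the ball.
-/

open MeasureTheory Metric Filter Set Module
open scoped ENNReal NNReal Topology Pointwise RealInnerProductSpace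

lemma LipschitzWith.abs_sub_rpow_le_integral_deriv {K : ℝ≥0} {g : ℝ → ℝ} (hg : LipschitzWith K g)
    {p : ℝ} (hp : 1 ≤ p) : |g 1 - g 0| ^ p ≤ ∫ t in Ioc (0 : ℝ) 1, |deriv g t| ^ p := by
  have : IsProbabilityMeasure (volume.restrict (Ioc (0 : ℝ) 1)) := ⟨by simp⟩
  have hftc : g 1 - g 0 = ∫ t in Ioc (0 : ℝ) 1, deriv g t := by
    rw [← intervalIntegral.integral_of_le zero_le_one,
      hg.lipschitzOnWith.absolutelyContinuousOnInterval.integral_deriv_eq_sub]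
  have hbound : ∀ t, |deriv g t| ≤ K := fun t => norm_deriv_le_of_lipschitz hg
  have hint : Integrable (deriv g) (volume.restrict (Ioc (0 : ℝ) 1)) :=
    .of_bound (measurable_deriv g).aestronglyMeasurable K (ae_of_all _ hbound)
  have hint_p : Integrable (fun t => |deriv g t| ^ p) (volume.restrict (Ioc (0 : ℝ) 1)) := by
    refine .of_bound ((measurable_deriv g).abs.pow_const p).aestronglyMeasurable (K ^ p)
      (ae_of_all _ fun t => ?_)
    rw [Real.norm_of_nonneg (by positivity)]
    exact Real.rpow_le_rpow (abs_nonneg _) (hbound t) (by linarith)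
  calc |g 1 - g 0| ^ p ≤ (∫ t in Ioc (0 : ℝ) 1, |deriv g t|) ^ p := by
        rw [hftc]
        exact Real.rpow_le_rpow (abs_nonneg _) abs_integral_le_integral_abs (by linarith)
    _ ≤ ∫ t in Ioc (0 : ℝ) 1, |deriv g t| ^ p :=
        (convexOn_rpow hp).map_integral_le
          (Real.continuous_rpow_const (by linarith)).continuousOn isClosed_Ici
          (ae_of_all _ fun t => abs_nonneg (deriv g t)) hint.abs hint_p

theorem tendsto_lintegral_of_ae_tendsto_of_lintegral_le {α ι : Type*} [MeasurableSpace α]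
    {μ : Measure α} {l : Filter ι} [l.IsCountablyGenerated] {F : ι → α → ℝ≥0∞}
    {G : α → ℝ≥0∞} (hF : ∀ i, AEMeasurable (F i) μ)
    (hlim : ∀ᵐ a ∂μ, Tendsto (F · a) l (𝓝 (G a)))
    (hle : ∀ᶠ i in l, ∫⁻ a, F i a ∂μ ≤ ∫⁻ a, G a ∂μ) :
    Tendsto (fun i => ∫⁻ a, F i a ∂μ) l (𝓝 (∫⁻ a, G a ∂μ)) := by
  rcases l.eq_or_neBot with rfl | hl
  · exact tendsto_bot
  refine tendsto_of_le_liminf_of_limsup_le ?_ (limsup_le_of_le (by isBoundedDefault) hle)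
  calc ∫⁻ a, G a ∂μ = ∫⁻ a, liminf (F · a) l ∂μ :=
        lintegral_congr_ae (hlim.mono fun a ha => ha.liminf_eq.symm)
    _ ≤ liminf (fun i => ∫⁻ a, F i a ∂μ) l := lintegral_liminf_le' hF

section NormedSpace

variable {E : Type*} [NormedAddCommGroup E] [NormedSpace ℝ E] {f : E → ℝ} {L : ℝ≥0} {p : ℝ}

lemma LipschitzWith.abs_sub_rpow_le_integral_fderiv (hf : LipschitzWith L f) (hp : 1 ≤ p)
    (x z : E) (hx : ∀ᵐ t ∂volume.restrict (Ioc (0 : ℝ) 1), DifferentiableAt ℝ f (x + t • z)) :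
    |f (x + z) - f x| ^ p ≤ ∫ t in Ioc (0 : ℝ) 1, |fderiv ℝ f (x + t • z) z| ^ p := by
  obtain ⟨K, hline⟩ : ∃ K, LipschitzWith K fun t : ℝ => f (x + t • z) :=
    ⟨_, hf.comp ((LipschitzWith.const x).add (ContinuousLinearMap.toSpanSingleton ℝ z).lipschitz)⟩
  have hderiv : ∀ᵐ t ∂volume.restrict (Ioc (0 : ℝ) 1),
      deriv (fun t : ℝ => f (x + t • z)) t = fderiv ℝ f (x + t • z) z := by
    filter_upwards [hx] with t ht
    have hseg : HasDerivAt (fun t : ℝ => x + t • z) z t := by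
      simpa using ((hasDerivAt_id t).smul_const z).const_add x
    exact (ht.hasFDerivAt.comp_hasDerivAt t hseg).deriv
  calc |f (x + z) - f x| ^ p
      = |(fun t : ℝ => f (x + t • z)) 1 - (fun t : ℝ => f (x + t • z)) 0| ^ p := by simp
    _ ≤ ∫ t in Ioc (0 : ℝ) 1, |deriv (fun t : ℝ => f (x + t • z)) t| ^ p :=
        hline.abs_sub_rpow_le_integral_deriv hp
    _ = ∫ t in Ioc (0 : ℝ) 1, |fderiv ℝ f (x + t • z) z| ^ p :=
        integral_congr_ae (hderiv.mono fun t ht => by simp only [ht])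

lemma LipschitzWith.abs_diffQuot_le (hf : LipschitzWith L f) (x w : E) {r : ℝ} (hr : r ≠ 0) :
    |(f (x + r • w) - f x) / r| ≤ L * ‖w‖ := by
  rw [abs_div, div_le_iff₀ (abs_pos.2 hr)]
  calc |f (x + r • w) - f x| ≤ L * dist (x + r • w) x := hf.dist_le_mul _ _
    _ = L * ‖w‖ * |r| := by
        rw [dist_eq_norm, add_sub_cancel_left, norm_smul, Real.norm_eq_abs]; ring

lemma HasFDerivAt.tendsto_diffQuot {f' : E →L[ℝ] ℝ} {x : E} (hf : HasFDerivAt f f' x) (w : E) :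
    Tendsto (fun r : ℝ => (f (x + r • w) - f x) / r) (𝓝[≠] 0) (𝓝 (f' w)) := by
  have hline : HasDerivAt (fun t : ℝ => f (x + t • w)) (f' w) 0 := by
    have hseg : HasDerivAt (fun t : ℝ => x + t • w) w 0 := by
      simpa using ((hasDerivAt_id (0 : ℝ)).smul_const w).const_add x
    exact hf.comp_hasDerivAt_of_eq 0 hseg (by simp)
  simpa [div_eq_inv_mul] using hline.tendsto_slope_zero

end NormedSpace

lemma ae_ae_add_smul_mem {E : Type*} [NormedAddCommGroup E] [NormedSpace ℝ E]
    [SecondCountableTopology E] [MeasurableSpace E] [BorelSpace E] {μ : Measure E} [SFinite μ]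
    [μ.IsAddRightInvariant] {s : Set E} (hs : MeasurableSet s) (h : ∀ᵐ x ∂μ, x ∈ s) (z : E)
    (ν : Measure ℝ) [SFinite ν] : ∀ᵐ x ∂μ, ∀ᵐ t ∂ν, x + t • z ∈ s := by
  refine (Measure.ae_ae_comm (p := fun x t => x + t • z ∈ s) ?_).2 (ae_of_all _ fun t => ?_)
  · exact hs.preimage (by fun_prop)
  · exact (measurePreserving_add_right μ (t • z)).quasiMeasurePreserving.ae h

section AddHaar

variable {E : Type*} [NormedAddCommGroup E] [NormedSpace ℝ E] [FiniteDimensional ℝ E]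
  [MeasurableSpace E] [BorelSpace E] {μ : Measure E} [μ.IsAddHaarMeasure]
  {f : E → ℝ} {L : ℝ≥0} {p : ℝ}

lemma Continuous.integrableOn_ball {F : Type*} [NormedAddCommGroup F] {g : E → F}
    (hg : Continuous g) (x : E) (r : ℝ) : IntegrableOn g (ball x r) μ :=
  (hg.continuousOn.integrableOn_compact (isCompact_closedBall x r)).mono_set ball_subset_closedBall

lemma setAverage_ball_eq_setAverage_unitBall {F : Type*} [NormedAddCommGroup F]
    [NormedSpace ℝ F] (g : E → F) (x : E) {r : ℝ} (hr : 0 < r) :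
    ⨍ y in ball x r, g y ∂μ = ⨍ w in ball (0 : E) 1, g (x + r • w) ∂μ := by
  have hball : (fun z => x + z) ⁻¹' ball x r = r • ball (0 : E) 1 := by
    ext z
    simp [smul_unitBall_of_pos hr]
  have hint : ∫ y in ball x r, g y ∂μ
      = (r ^ finrank ℝ E) • ∫ w in ball (0 : E) 1, g (x + r • w) ∂μ := by
    rw [Measure.setIntegral_comp_smul_of_pos μ (fun z => g (x + z)) _ hr,
      smul_inv_smul₀ (by positivity), ← hball]
    exact ((measurePreserving_add_left μ x).setIntegral_preimage_emb
      (measurableEmbedding_addLeft x) g _).symm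
  rw [setAverage_eq, setAverage_eq, hint, measureReal_def, measureReal_def,
    Measure.addHaar_ball_of_pos μ x hr, ENNReal.toReal_mul, ENNReal.toReal_ofReal (by positivity),
    smul_smul, mul_inv_rev, inv_mul_cancel_right₀ (by positivity)]

lemma LipschitzWith.lintegral_abs_sub_rpow_le (hf : LipschitzWith L f) (hp : 1 ≤ p) (z : E) :
    ∫⁻ x, ENNReal.ofReal (|f (x + z) - f x| ^ p) ∂μ
      ≤ ∫⁻ x, ENNReal.ofReal (|fderiv ℝ f x z| ^ p) ∂μ := by
  have hmeas : Measurable fun x => ENNReal.ofReal (|fderiv ℝ f x z| ^ p) := by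
    have := measurable_fderiv_apply_const ℝ f z
    fun_prop
  have hline : ∀ᵐ x ∂μ, ∀ᵐ t ∂volume.restrict (Ioc (0 : ℝ) 1),
      DifferentiableAt ℝ f (x + t • z) :=
    ae_ae_add_smul_mem (measurableSet_of_differentiableAt ℝ f) hf.ae_differentiableAt z _
  calc ∫⁻ x, ENNReal.ofReal (|f (x + z) - f x| ^ p) ∂μ
      ≤ ∫⁻ x, (∫⁻ t in Ioc (0 : ℝ) 1, ENNReal.ofReal (|fderiv ℝ f (x + t • z) z| ^ p)) ∂μ := by
        refine lintegral_mono_ae (hline.mono fun x hx => ?_)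
        calc ENNReal.ofReal (|f (x + z) - f x| ^ p)
            ≤ ‖∫ t in Ioc (0 : ℝ) 1, |fderiv ℝ f (x + t • z) z| ^ p‖ₑ :=
              (ENNReal.ofReal_le_ofReal (hf.abs_sub_rpow_le_integral_fderiv hp x z hx)).trans
                (Real.ofReal_le_enorm _)
          _ ≤ _ := enorm_integral_le_lintegral_enorm _
          _ = _ := by simp_rw [Real.enorm_of_nonneg (Real.rpow_nonneg (abs_nonneg _) p)]
    _ = ∫⁻ t in Ioc (0 : ℝ) 1, ∫⁻ x, ENNReal.ofReal (|fderiv ℝ f (x + t • z) z| ^ p) ∂μ :=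
        lintegral_lintegral_swap ((hmeas.comp (f := fun q : E × ℝ => q.1 + q.2 • z)
          (by fun_prop)).aemeasurable)
    _ = ∫⁻ x, ENNReal.ofReal (|fderiv ℝ f x z| ^ p) ∂μ := by
        simp [lintegral_add_right_eq_self (fun x => ENNReal.ofReal (|fderiv ℝ f x z| ^ p))]

lemma LipschitzWith.lintegral_abs_diffQuot_rpow_le (hf : LipschitzWith L f) (hp : 1 ≤ p)
    {r : ℝ} (hr : r ≠ 0) (w : E) :
    ∫⁻ x, ENNReal.ofReal (|(f (x + r • w) - f x) / r| ^ p) ∂μ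
      ≤ ∫⁻ x, ENNReal.ofReal (|fderiv ℝ f x w| ^ p) ∂μ := by
  have hr_p : 0 < |r| ^ p := by positivity
  have hquot : ∀ x, ENNReal.ofReal (|(f (x + r • w) - f x) / r| ^ p)
      = ENNReal.ofReal (|r| ^ p)⁻¹ * ENNReal.ofReal (|f (x + r • w) - f x| ^ p) := fun x => by
    rw [← ENNReal.ofReal_mul (by positivity), abs_div,
      Real.div_rpow (abs_nonneg _) (abs_nonneg _), inv_mul_eq_div]
  have hscale : ∀ x, ENNReal.ofReal (|fderiv ℝ f x (r • w)| ^ p)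
      = ENNReal.ofReal (|r| ^ p) * ENNReal.ofReal (|fderiv ℝ f x w| ^ p) := fun x => by
    rw [← ENNReal.ofReal_mul hr_p.le, map_smul, smul_eq_mul, abs_mul,
      Real.mul_rpow (abs_nonneg _) (abs_nonneg _)]
  calc ∫⁻ x, ENNReal.ofReal (|(f (x + r • w) - f x) / r| ^ p) ∂μ
      = ENNReal.ofReal (|r| ^ p)⁻¹ * ∫⁻ x, ENNReal.ofReal (|f (x + r • w) - f x| ^ p) ∂μ := by
        simp_rw [hquot]
        exact lintegral_const_mul' _ _ ENNReal.ofReal_ne_top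
    _ ≤ ENNReal.ofReal (|r| ^ p)⁻¹ * ∫⁻ x, ENNReal.ofReal (|fderiv ℝ f x (r • w)| ^ p) ∂μ :=
        mul_le_mul_right (hf.lintegral_abs_sub_rpow_le hp _) _
    _ = ∫⁻ x, ENNReal.ofReal (|fderiv ℝ f x w| ^ p) ∂μ := by
        simp_rw [hscale]
        rw [lintegral_const_mul' _ _ ENNReal.ofReal_ne_top, ← mul_assoc,
          ← ENNReal.ofReal_mul (by positivity), inv_mul_cancel₀ hr_p.ne', ENNReal.ofReal_one,
          one_mul]

lemma LipschitzWith.lintegral_lintegral_diffQuot_le (hf : LipschitzWith L f) (hp : 1 ≤ p)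
    {r : ℝ} (hr : r ≠ 0) (ν : Measure E) [SFinite ν] :
    ∫⁻ x, ∫⁻ w, ENNReal.ofReal (|(f (x + r • w) - f x) / r| ^ p) ∂ν ∂μ
      ≤ ∫⁻ x, ∫⁻ w, ENNReal.ofReal (|fderiv ℝ f x w| ^ p) ∂ν ∂μ := by
  have hcont := hf.continuous
  have hfderiv := ContinuousLinearMap.measurable_apply₂.comp
    ((measurable_fderiv ℝ f).prodMap (measurable_id (α := E)))
  calc ∫⁻ x, ∫⁻ w, ENNReal.ofReal (|(f (x + r • w) - f x) / r| ^ p) ∂ν ∂μ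
      = ∫⁻ w, ∫⁻ x, ENNReal.ofReal (|(f (x + r • w) - f x) / r| ^ p) ∂μ ∂ν :=
        lintegral_lintegral_swap (by fun_prop)
    _ ≤ ∫⁻ w, ∫⁻ x, ENNReal.ofReal (|fderiv ℝ f x w| ^ p) ∂μ ∂ν :=
        lintegral_mono fun w => hf.lintegral_abs_diffQuot_rpow_le hp hr w
    _ = ∫⁻ x, ∫⁻ w, ENNReal.ofReal (|fderiv ℝ f x w| ^ p) ∂ν ∂μ :=
        (lintegral_lintegral_swap (by fun_prop)).symm

lemma LipschitzWith.tendsto_lintegral_ball_diffQuot (hf : LipschitzWith L f) (hp : 0 ≤ p)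
    {x : E} (hx : DifferentiableAt ℝ f x) :
    Tendsto (fun r : ℝ => ∫⁻ w in ball (0 : E) 1,
        ENNReal.ofReal (|(f (x + r • w) - f x) / r| ^ p) ∂μ) (𝓝[≠] 0)
      (𝓝 (∫⁻ w in ball (0 : E) 1, ENNReal.ofReal (|fderiv ℝ f x w| ^ p) ∂μ)) := by
  have hcont := hf.continuous
  have habs_rpow : Continuous fun t : ℝ => ENNReal.ofReal (|t| ^ p) :=
    ENNReal.continuous_ofReal.comp (continuous_abs.rpow_const fun _ => Or.inr hp)
  have hbound_fin : ∫⁻ _ in ball (0 : E) 1, ENNReal.ofReal (L ^ p) ∂μ ≠ ∞ := by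
    rw [setLIntegral_const]
    exact ENNReal.mul_ne_top ENNReal.ofReal_ne_top measure_ball_lt_top.ne
  refine tendsto_lintegral_filter_of_dominated_convergence _
    (Eventually.of_forall fun r => by fun_prop) ?_ hbound_fin
    (ae_of_all _ fun w => (habs_rpow.tendsto _).comp (hx.hasFDerivAt.tendsto_diffQuot w))
  filter_upwards [self_mem_nhdsWithin] with r hr
  refine (ae_restrict_iff' measurableSet_ball).2 (ae_of_all _ fun w hw => ?_)
  have hw : ‖w‖ ≤ 1 := (mem_ball_zero_iff.1 hw).le
  gcongr
  calc |(f (x + r • w) - f x) / r| ≤ L * ‖w‖ := hf.abs_diffQuot_le x w hr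
    _ ≤ L := mul_le_of_le_one_right L.coe_nonneg hw

theorem LipschitzWith.tendsto_lintegral_lintegral_ball_diffQuot (hf : LipschitzWith L f)
    (hp : 1 ≤ p) :
    Tendsto (fun r : ℝ => ∫⁻ x, ∫⁻ w in ball (0 : E) 1,
        ENNReal.ofReal (|(f (x + r • w) - f x) / r| ^ p) ∂μ ∂μ) (𝓝[≠] 0)
      (𝓝 (∫⁻ x, ∫⁻ w in ball (0 : E) 1, ENNReal.ofReal (|fderiv ℝ f x w| ^ p) ∂μ ∂μ)) := by
  have hcont := hf.continuous
  refine tendsto_lintegral_of_ae_tendsto_of_lintegral_le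
    (fun r => (Measurable.lintegral_prod_right' (f := fun q : E × E =>
      ENNReal.ofReal (|(f (q.1 + r • q.2) - f q.1) / r| ^ p)) (by fun_prop)).aemeasurable) ?_ ?_
  · filter_upwards [hf.ae_differentiableAt] with x hx
    exact hf.tendsto_lintegral_ball_diffQuot (by linarith) hx
  · filter_upwards [self_mem_nhdsWithin] with r hr
    exact hf.lintegral_lintegral_diffQuot_le hp hr _

lemma LipschitzWith.integral_ballAverage_eq_toReal_lintegral_diffQuot (hf : LipschitzWith L f)
    (hp : 0 ≤ p) {r : ℝ} (hr : 0 < r) :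
    (1 / r ^ p) * ∫ x, (μ (ball x r)).toReal⁻¹ * ∫ y in ball x r, |f x - f y| ^ p ∂μ ∂μ
      = (μ (ball (0 : E) 1)).toReal⁻¹ * (∫⁻ x, ∫⁻ w in ball (0 : E) 1,
          ENNReal.ofReal (|(f (x + r • w) - f x) / r| ^ p) ∂μ ∂μ).toReal := by
  have hcont := hf.continuous
  have hint : ∀ x, IntegrableOn (fun w => |(f (x + r • w) - f x) / r| ^ p) (ball 0 1) μ :=
    fun x => Continuous.integrableOn_ball (by fun_prop (disch := exact hp)) 0 1
  have hpoint : ∀ x, (1 / r ^ p) * ((μ (ball x r)).toReal⁻¹ * ∫ y in ball x r, |f x - f y| ^ p ∂μ)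
      = (μ (ball (0 : E) 1)).toReal⁻¹ * (∫⁻ w in ball (0 : E) 1,
          ENNReal.ofReal (|(f (x + r • w) - f x) / r| ^ p) ∂μ).toReal := by
    intro x
    have havg := setAverage_ball_eq_setAverage_unitBall (μ := μ) (fun y => |f x - f y| ^ p) x hr
    simp only [setAverage_eq, smul_eq_mul, measureReal_def] at havg
    rw [havg, ← integral_eq_lintegral_of_nonneg_ae (ae_of_all _ fun w => by positivity)
      (hint x).aestronglyMeasurable]
    have hquot : ∀ w, |(f (x + r • w) - f x) / r| ^ p = |f x - f (x + r • w)| ^ p / r ^ p :=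
      fun w => by rw [abs_div, abs_of_pos hr, Real.div_rpow (abs_nonneg _) hr.le, abs_sub_comm]
    simp_rw [hquot, integral_div]
    ring
  rw [← integral_const_mul]
  simp_rw [hpoint]
  rw [integral_const_mul, integral_toReal
    (Measurable.lintegral_prod_right' (f := fun q : E × E =>
      ENNReal.ofReal (|(f (q.1 + r • q.2) - f q.1) / r| ^ p)) (by fun_prop)).aemeasurable
    (ae_of_all _ fun x => (hint x).lintegral_lt_top)]

end AddHaar

section Rotation

variable {E : Type*} [NormedAddCommGroup E] [InnerProductSpace ℝ E] [FiniteDimensional ℝ E]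
  [MeasurableSpace E] [BorelSpace E]

lemma setLIntegral_ball_comp_inner_eq {u v : E} (huv : ‖u‖ = ‖v‖) (g : ℝ → ℝ≥0∞) (R : ℝ) :
    ∫⁻ w in ball (0 : E) R, g ⟪w, u⟫ = ∫⁻ w in ball (0 : E) R, g ⟪w, v⟫ := by
  set O : E ≃ₗᵢ[ℝ] E := Submodule.reflection (ℝ ∙ (u - v))ᗮ
  have hO : ∀ w, ⟪O w, v⟫ = ⟪w, u⟫ := fun w => by
    rw [← Submodule.reflection_sub huv, O.inner_map_map]
  have hball : O ⁻¹' ball (0 : E) R = ball 0 R := by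
    ext w
    simp
  simp_rw [← hO]
  conv_lhs => rw [← hball]
  exact O.measurePreserving.setLIntegral_comp_preimage_emb
    O.toHomeomorph.measurableEmbedding (fun w => g ⟪w, v⟫) _

lemma setLIntegral_ball_abs_apply_rpow {p : ℝ} (ℓ : E →L[ℝ] ℝ) {e : E} (he : ‖e‖ = 1) (R : ℝ) :
    ∫⁻ w in ball (0 : E) R, ENNReal.ofReal (|ℓ w| ^ p)
      = ENNReal.ofReal (‖ℓ‖ ^ p) * ∫⁻ w in ball (0 : E) R, ENNReal.ofReal (|⟪w, e⟫| ^ p) := by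
  set u : E := (InnerProductSpace.toDual ℝ E).symm ℓ
  have hℓ : ∀ w, ℓ w = ⟪w, u⟫ := fun w => by
    rw [real_inner_comm, InnerProductSpace.toDual_symm_apply]
  have hu : ‖u‖ = ‖‖ℓ‖ • e‖ := by
    rw [norm_smul, he, mul_one, norm_norm, LinearIsometryEquiv.norm_map]
  simp_rw [hℓ]
  rw [setLIntegral_ball_comp_inner_eq hu (fun t => ENNReal.ofReal (|t| ^ p)),
    ← lintegral_const_mul' _ _ ENNReal.ofReal_ne_top]
  congr 1 with w
  rw [← ENNReal.ofReal_mul (by positivity), real_inner_smul_right, abs_mul, abs_norm,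
    Real.mul_rpow (norm_nonneg _) (abs_nonneg _)]

end Rotation

theorem bbm_formula_lipschitz_sobolev_euclidean_general (N : ℕ) (hN : 0 < N) (p : ℝ) (hp : 1 < p)
    (f : EuclideanSpace ℝ (Fin N) → ℝ) (L : NNReal) (hf : LipschitzWith L f)
    (hgradLp : MemLp (fun x => ‖fderiv ℝ f x‖) (ENNReal.ofReal p) volume) :
    Tendsto
      (fun r => (1 / r ^ p) *
        ∫ x, ((volume (ball x r)).toReal⁻¹ *
          ∫ y in ball x r, |f x - f y| ^ p ∂volume) ∂volume)
      (nhdsWithin 0 (Set.Ioi 0))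
      (nhds (((volume (ball (0 : EuclideanSpace ℝ (Fin N)) 1)).toReal⁻¹ *
          ∫ z in ball (0 : EuclideanSpace ℝ (Fin N)) 1,
            |⟪z, EuclideanSpace.single (⟨0, hN⟩ : Fin N) (1 : ℝ)⟫| ^ p ∂volume) *
        ∫ x, ‖fderiv ℝ f x‖ ^ p ∂volume)) := by
  set e := EuclideanSpace.single (⟨0, hN⟩ : Fin N) (1 : ℝ)
  have he : ‖e‖ = 1 := by simp [e]
  have hconst := ofReal_integral_eq_lintegral_ofReal
    (Continuous.integrableOn_ball (μ := volume) (g := fun w => |⟪w, e⟫| ^ p)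
      (by fun_prop (disch := linarith)) 0 1) (ae_of_all _ fun w => by positivity)
  have hgrad := ofReal_integral_eq_lintegral_ofReal (μ := volume)
    (f := fun x => ‖fderiv ℝ f x‖ ^ p) (by
      simpa [ENNReal.toReal_ofReal (by linarith : 0 ≤ p)] using
        hgradLp.integrable_norm_rpow (by simp; linarith) ENNReal.ofReal_ne_top)
    (ae_of_all _ fun x => by positivity)
  have hlimit : ∫⁻ x, ∫⁻ w in ball 0 1, ENNReal.ofReal (|fderiv ℝ f x w| ^ p)
      = ENNReal.ofReal ((∫ w in ball 0 1, |⟪w, e⟫| ^ p) * ∫ x, ‖fderiv ℝ f x‖ ^ p) := by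
    simp_rw [setLIntegral_ball_abs_apply_rpow _ he, ← hconst]
    rw [lintegral_mul_const' _ _ ENNReal.ofReal_ne_top, ← hgrad,
      ← ENNReal.ofReal_mul (by positivity), mul_comm]
  have hconv := ((ENNReal.tendsto_toReal (hlimit ▸ ENNReal.ofReal_ne_top)).comp
    ((hf.tendsto_lintegral_lintegral_ball_diffQuot (μ := volume) hp.le).mono_left
      (nhdsGT_le_nhdsNE 0))).const_mul (volume (ball (0 : EuclideanSpace ℝ (Fin N)) 1)).toReal⁻¹
  rw [hlimit, ENNReal.toReal_ofReal (by positivity), ← mul_assoc] at hconv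
  refine hconv.congr' ?_
  filter_upwards [self_mem_nhdsWithin] with r hr
  exact (hf.integral_ballAverage_eq_toReal_lintegral_diffQuot (by linarith) hr).symm

/-- Integrated BBM formula for a Lipschitz function in `W^{1,p}(ℝ^N)`: the BBM
difference quotients with averaged-ball kernel converge to `C_{p,N} ∫ |∇f|^p`. -/
theorem bbm_formula_lipschitz_sobolev_euclidean (N : ℕ) (hN : 0 < N) (p : ℝ) (hp : 1 < p)
    (f : EuclideanSpace ℝ (Fin N) → ℝ) (L : NNReal) (hf : LipschitzWith L f)
    (hfLp : MemLp f (ENNReal.ofReal p) volume)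
    (hgradLp : MemLp (fun x => ‖fderiv ℝ f x‖) (ENNReal.ofReal p) volume) :
    Tendsto
      (fun r => (1 / r ^ p) *
        ∫ x, ((volume (ball x r)).toReal⁻¹ *
          ∫ y in ball x r, |f x - f y| ^ p ∂volume) ∂volume)
      (nhdsWithin 0 (Set.Ioi 0))
      (nhds (((volume (ball (0 : EuclideanSpace ℝ (Fin N)) 1)).toReal⁻¹ *
          ∫ z in ball (0 : EuclideanSpace ℝ (Fin N)) 1,
            |⟪z, EuclideanSpace.single (⟨0, hN⟩ : Fin N) (1 : ℝ)⟫| ^ p ∂volume) *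
        ∫ x, ‖fderiv ℝ f x‖ ^ p ∂volume)) :=
  bbm_formula_lipschitz_sobolev_euclidean_general N hN p hp f L hf hgradLp
end

section
/- Let H : (−1,1) → ℝ be defined by H(s) = (2π/(1 − cos(2πs))) · (s − sin(2πs)/(2π)) for s ≠ 0 and H(0) = 0. Then H is a strictly monotone continuous bijection from (−1,1) onto ℝ with H(0) = 0. -/
/-!
Put `θ = 2πs`. Then `H(s) = (θ - sin θ) / (1 - cos θ)`, the ratio of the coordinates of the
cycloid, also at `s = 0` because Lean's `0 / 0 = 0`. The numerator of its derivative is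
`2 - 2 cos θ - θ sin θ = 4 sin(θ/2) (sin(θ/2) - (θ/2) cos(θ/2))`, positive for `0 < |θ| < 2π`
by `tan u > u`. The same inequality `θ cos θ < sin θ` bounds the ratio between `0` and `θ` on
`[0, π)`, hence continuity at `0` by oddness. As `θ → ±2π` the denominator tends to `0⁺` while
the numerator tends to `±2π`, so the continuous function is onto `ℝ`.
-/

open Real Set Filter Topology

noncomputable def cycloidRatio (θ : ℝ) : ℝ := (θ - sin θ) / (1 - cos θ)

lemma cycloidRatio_neg (θ : ℝ) : cycloidRatio (-θ) = -cycloidRatio θ := by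
  simp only [cycloidRatio, sin_neg, cos_neg]
  ring

lemma one_sub_cos_pos {θ : ℝ} (h0 : θ ≠ 0) (hlo : -(2 * π) < θ) (hhi : θ < 2 * π) :
    0 < 1 - cos θ :=
  sub_pos.2 <| (cos_le_one θ).lt_of_ne <| mt (cos_eq_one_iff_of_lt_of_lt hlo hhi).1 h0

lemma mul_cos_lt_sin {x : ℝ} (h0 : 0 < x) (hπ : x < π) : x * cos x < sin x := by
  rcases le_or_gt (cos x) 0 with hcos | hcos
  · nlinarith [sin_pos_of_pos_of_lt_pi h0 hπ]
  · have hx : x < π / 2 := by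
      by_contra! h
      exact hcos.not_ge (cos_nonpos_of_pi_div_two_le_of_le h (by linarith))
    have := lt_tan h0 hx
    rwa [tan_eq_sin_div_cos, lt_div_iff₀ hcos] at this

lemma sin_mul_sin_sub_mul_cos_pos {x : ℝ} (h0 : x ≠ 0) (hx : |x| < π) :
    0 < sin x * (sin x - x * cos x) := by
  wlog hpos : 0 < x generalizing x
  · have := this (neg_ne_zero.2 h0) (by rwa [abs_neg])
      (neg_pos.2 (h0.lt_or_gt.resolve_right hpos))
    convert this using 1
    simp only [sin_neg, cos_neg]
    ring
  have hπ : x < π := (le_abs_self x).trans_lt hx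
  exact mul_pos (sin_pos_of_pos_of_lt_pi hpos hπ) (sub_pos.2 (mul_cos_lt_sin hpos hπ))

lemma two_sub_two_mul_cos_sub_mul_sin_pos {θ : ℝ} (h0 : θ ≠ 0) (hlo : -(2 * π) < θ)
    (hhi : θ < 2 * π) : 0 < 2 - 2 * cos θ - θ * sin θ := by
  have key := sin_mul_sin_sub_mul_cos_pos (x := θ / 2) (by positivity)
    (by rw [abs_lt]; constructor <;> linarith)
  have hθ : θ = 2 * (θ / 2) := by ring
  rw [hθ, cos_two_mul, sin_two_mul, ← hθ]
  nlinarith [sin_sq_add_cos_sq (θ / 2)]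

lemma hasDerivAt_cycloidRatio {θ : ℝ} (h : 1 - cos θ ≠ 0) :
    HasDerivAt cycloidRatio ((2 - 2 * cos θ - θ * sin θ) / (1 - cos θ) ^ 2) θ := by
  refine (((hasDerivAt_id' θ).sub (hasDerivAt_sin θ)).div
    ((hasDerivAt_const θ 1).sub (hasDerivAt_cos θ)) h).congr_deriv ?_
  simp only [Pi.sub_apply]
  congr 1
  linear_combination sin_sq_add_cos_sq θ

lemma cycloidRatio_nonneg {θ : ℝ} (h0 : 0 ≤ θ) : 0 ≤ cycloidRatio θ :=
  div_nonneg (sub_nonneg.2 (sin_le h0)) (sub_nonneg.2 (cos_le_one θ))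

lemma cycloidRatio_le_self {θ : ℝ} (h0 : 0 ≤ θ) (hπ : θ < π) : cycloidRatio θ ≤ θ := by
  rcases h0.eq_or_lt with rfl | hpos
  · simp [cycloidRatio]
  rw [cycloidRatio, div_le_iff₀ (one_sub_cos_pos hpos.ne' (by linarith [pi_pos]) (by linarith))]
  linarith [mul_cos_lt_sin hpos hπ]

lemma abs_cycloidRatio_le {θ : ℝ} (hθ : |θ| < π) : |cycloidRatio θ| ≤ |θ| := by
  wlog h0 : 0 ≤ θ generalizing θ
  · simpa only [cycloidRatio_neg, abs_neg] using this (θ := -θ) (by rwa [abs_neg]) (by linarith)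
  rw [abs_of_nonneg h0] at hθ ⊢
  rw [abs_of_nonneg (cycloidRatio_nonneg h0)]
  exact cycloidRatio_le_self h0 hθ

lemma continuousAt_cycloidRatio_zero : ContinuousAt cycloidRatio 0 := by
  have hG0 : cycloidRatio 0 = 0 := by simp [cycloidRatio]
  rw [ContinuousAt, hG0]
  refine squeeze_zero_norm' ?_ (continuous_abs.tendsto' 0 0 abs_zero)
  filter_upwards [Ioo_mem_nhds (neg_neg_of_pos pi_pos) pi_pos] with θ hθ
  exact abs_cycloidRatio_le (abs_lt.2 hθ)

lemma continuousOn_cycloidRatio : ContinuousOn cycloidRatio (Ioo (-(2 * π)) (2 * π)) := by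
  intro θ ⟨hlo, hhi⟩
  rcases eq_or_ne θ 0 with rfl | h0
  · exact continuousAt_cycloidRatio_zero.continuousWithinAt
  · exact (hasDerivAt_cycloidRatio (one_sub_cos_pos h0 hlo hhi).ne').continuousAt
      |>.continuousWithinAt

lemma strictMonoOn_cycloidRatio_of_zero_notMem_interior {s : Set ℝ} (hs : Convex ℝ s)
    (hsub : s ⊆ Ioo (-(2 * π)) (2 * π)) (h0 : 0 ∉ interior s) : StrictMonoOn cycloidRatio s := by
  refine strictMonoOn_of_hasDerivWithinAt_pos hs (continuousOn_cycloidRatio.mono hsub)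
    (fun θ hθ ↦ (hasDerivAt_cycloidRatio ?_).hasDerivWithinAt) fun θ hθ ↦ ?_
  all_goals
    obtain ⟨hlo, hhi⟩ := hsub (interior_subset hθ)
    have hne : θ ≠ 0 := fun h ↦ h0 (h ▸ hθ)
  · exact (one_sub_cos_pos hne hlo hhi).ne'
  · exact div_pos (two_sub_two_mul_cos_sub_mul_sin_pos hne hlo hhi)
      (pow_pos (one_sub_cos_pos hne hlo hhi) 2)

lemma strictMonoOn_cycloidRatio : StrictMonoOn cycloidRatio (Ioo (-(2 * π)) (2 * π)) := by
  have hπ : 0 < 2 * π := two_pi_pos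
  rw [← Ioc_union_Ico_eq_Ioo (neg_neg_of_pos hπ) hπ]
  have hleft := strictMonoOn_cycloidRatio_of_zero_notMem_interior (convex_Ioc _ _)
    (Ioc_subset_Ioo_right hπ) (by simp)
  have hright := strictMonoOn_cycloidRatio_of_zero_notMem_interior (convex_Ico _ _)
    (Ico_subset_Ioo_left (neg_neg_of_pos hπ)) (by simp)
  exact hleft.union hright (isGreatest_Ioc (neg_neg_of_pos hπ)) (isLeast_Ico hπ)

lemma tendsto_cycloidRatio_nhdsLT_two_pi : Tendsto cycloidRatio (𝓝[<] (2 * π)) atTop := by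
  have hnum : Tendsto (fun θ ↦ θ - sin θ) (𝓝[<] (2 * π)) (𝓝 (2 * π)) := by
    simpa using ((by fun_prop : Continuous fun θ : ℝ ↦ θ - sin θ).tendsto (2 * π)).mono_left
      nhdsWithin_le_nhds
  have hden : Tendsto (fun θ ↦ 1 - cos θ) (𝓝[<] (2 * π)) (𝓝[>] 0) := by
    refine tendsto_nhdsWithin_iff.2 ⟨?_, ?_⟩
    · simpa using ((by fun_prop : Continuous fun θ : ℝ ↦ 1 - cos θ).tendsto (2 * π)).mono_left
        nhdsWithin_le_nhds
    · filter_upwards [Ioo_mem_nhdsLT two_pi_pos] with θ ⟨hlo, hhi⟩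
      exact one_sub_cos_pos hlo.ne' (by linarith [pi_pos]) hhi
  exact hnum.pos_mul_atTop two_pi_pos (tendsto_inv_nhdsGT_zero.comp hden)

lemma tendsto_cycloidRatio_nhdsGT_neg_two_pi : Tendsto cycloidRatio (𝓝[>] (-(2 * π))) atBot := by
  refine (tendsto_neg_atTop_atBot.comp
    (tendsto_cycloidRatio_nhdsLT_two_pi.comp tendsto_neg_nhdsGT_neg)).congr fun θ ↦ ?_
  simp [cycloidRatio_neg]

lemma bijOn_cycloidRatio : BijOn cycloidRatio (Ioo (-(2 * π)) (2 * π)) univ := by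
  have hπ : -(2 * π) < 2 * π := neg_lt_self two_pi_pos
  refine ⟨mapsTo_univ _ _, strictMonoOn_cycloidRatio.injOn, ?_⟩
  exact continuousOn_cycloidRatio.surjOn_of_tendsto (nonempty_Ioo.2 hπ)
    (by rw [tendsto_comp_coe_Ioo_atBot hπ]; exact tendsto_cycloidRatio_nhdsGT_neg_two_pi)
    (by rw [tendsto_comp_coe_Ioo_atTop hπ]; exact tendsto_cycloidRatio_nhdsLT_two_pi)

lemma bijOn_two_pi_mul : BijOn (2 * π * ·) (Ioo (-1 : ℝ) 1) (Ioo (-(2 * π)) (2 * π)) := by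
  have := (mul_right_injective₀ two_pi_pos.ne').injOn.bijOn_image (s := Ioo (-1 : ℝ) 1)
  rwa [image_mul_left_Ioo two_pi_pos, mul_neg_one, mul_one] at this

/-- The Hajłasz–Zimmerman function `H(s) = (2π/(1-cos 2πs))(s - sin(2πs)/(2π))` is a
strictly monotone continuous bijection from `(-1,1)` onto `ℝ` with `H(0) = 0`. -/
theorem hajlasz_zimmerman_H_bijective :
    ∀ H : ℝ → ℝ,
      (∀ s, s ≠ 0 →
        H s = (2 * π / (1 - Real.cos (2 * π * s))) * (s - Real.sin (2 * π * s) / (2 * π))) →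
      H 0 = 0 →
      StrictMonoOn H (Ioo (-1 : ℝ) 1) ∧ ContinuousOn H (Ioo (-1 : ℝ) 1) ∧
        BijOn H (Ioo (-1 : ℝ) 1) univ := by
  intro H hH hH0
  obtain rfl : H = cycloidRatio ∘ (2 * π * ·) := by
    funext s
    rcases eq_or_ne s 0 with rfl | hs
    · simp [hH0, cycloidRatio]
    · rw [hH s hs, Function.comp_apply, cycloidRatio]
      field_simp
  exact ⟨strictMonoOn_cycloidRatio.comp ((strictMono_mul_left_of_pos two_pi_pos).strictMonoOn _)
      bijOn_two_pi_mul.mapsTo,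
    continuousOn_cycloidRatio.comp (by fun_prop) bijOn_two_pi_mul.mapsTo,
    bijOn_cycloidRatio.comp bijOn_two_pi_mul⟩
end

section
/- Let d₀ : ℝ³ → ℝ be defined for (x₁,x₂,x₃) with (x₁,x₂) ≠ (0,0) by d₀(x₁,x₂,x₃) = (x₃/√(x₁²+x₂²)) sin(π H^{-1}(x₃/(x₁²+x₂²))) + √(x₁²+x₂²) cos(π H^{-1}(x₃/(x₁²+x₂²))), where H is as above. Then for fixed z = (z₁,z₂,z₃) ∈ ℝ³, lim_{s→+∞} [ d₀(z₁ − s, z₂, z₃ − 2z₂ s) − s ] = −z₁, and lim_{s→−∞} [ d₀(z₁ − s, z₂, z₃ − 2z₂ s) − |s| ] = z₁. -/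
/-!
With `u = 2πs` one has `H s = (u - sin u) / (1 - cos u)`, and `u (1 - cos u) ≤ 3 (u - sin u)` on
`[0, 2π]` (the derivative of the difference is `4 sin v (sin v - v cos v)`, `v = u / 2`), so
`|H⁻¹ t| ≤ 3 |t| / (2π)`. Writing `ρ = √(x₁² + x₂²)` and `t = x₃ / ρ²`, the bounds `|sin y| ≤ |y|`
and `1 - cos y ≤ y² / 2` then give `|d₀ x - ρ| = O(x₃² / ρ³)`. Along `(z₁ - s, z₂, z₃ - 2 z₂ s)`
the third coordinate grows only linearly and `ρ - |z₁ - s| = O(1 / |s|)`, so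
`d₀ - |z₁ - s| → 0` as `|s| → ∞`; both limits follow.
-/

open Real Set Filter Topology Bornology

lemma mul_cos_le_sin {v : ℝ} (h0 : 0 ≤ v) (hπ : v ≤ π) : v * cos v ≤ sin v := by
  rcases le_or_gt (cos v) 0 with hcos | hcos
  · nlinarith [sin_nonneg_of_nonneg_of_le_pi h0 hπ]
  · have hv : v < π / 2 := by
      by_contra! h
      exact hcos.not_ge (cos_nonpos_of_pi_div_two_le_of_le h (by linarith))
    have := le_tan h0 hv
    rwa [tan_eq_sin_div_cos, le_div_iff₀ hcos] at this

lemma mul_one_sub_cos_le_three_mul_sub_sin {u : ℝ} (h0 : 0 ≤ u) (h2π : u ≤ 2 * π) :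
    u * (1 - cos u) ≤ 3 * (u - sin u) := by
  set f : ℝ → ℝ := fun u => 3 * (u - sin u) - u * (1 - cos u)
  have hf' (x : ℝ) : HasDerivAt f (2 * (1 - cos x) - x * sin x) x :=
    ((((hasDerivAt_id' x).sub (hasDerivAt_sin x)).const_mul 3).sub
      ((hasDerivAt_id' x).mul ((hasDerivAt_cos x).const_sub 1))).congr_deriv (by ring)
  have hmono : MonotoneOn f (Icc 0 (2 * π)) := by
    refine monotoneOn_of_hasDerivWithinAt_nonneg (convex_Icc _ _) (by fun_prop)
      (fun x _ => (hf' x).hasDerivWithinAt) fun x hx => ?_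
    obtain ⟨hx0, hx2π⟩ : x ∈ Ioo 0 (2 * π) := by rwa [interior_Icc] at hx
    have hcos := cos_two_mul (x / 2)
    have hsin := sin_two_mul (x / 2)
    rw [mul_div_cancel₀ x two_ne_zero] at hcos hsin
    have hfactor : 2 * (1 - cos x) - x * sin x
        = 4 * sin (x / 2) * (sin (x / 2) - x / 2 * cos (x / 2)) := by
      linear_combination -2 * hcos - x * hsin - 4 * sin_sq_add_cos_sq (x / 2)
    rw [hfactor]
    exact mul_nonneg (mul_nonneg zero_le_four (sin_nonneg_of_nonneg_of_le_pi (by linarith)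
      (by linarith))) (sub_nonneg.2 (mul_cos_le_sin (by linarith) (by linarith)))
  have := hmono (left_mem_Icc.2 (by positivity)) ⟨h0, h2π⟩ h0
  simp only [f, sin_zero, cos_zero] at this
  linarith

lemma div_three_le_sub_sin_div_one_sub_cos {u : ℝ} (h0 : 0 < u) (h2π : u < 2 * π) :
    u / 3 ≤ (u - sin u) / (1 - cos u) := by
  have hcos : cos u < 1 := (cos_le_one u).lt_of_ne fun h =>
    h0.ne' ((cos_eq_one_iff_of_lt_of_lt (by linarith [pi_pos]) h2π).1 h)
  rw [le_div_iff₀ (sub_pos.2 hcos)]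
  linarith [mul_one_sub_cos_le_three_mul_sub_sin h0.le h2π.le]

lemma abs_div_three_le_abs_sub_sin_div_one_sub_cos {u : ℝ} (hu : |u| < 2 * π) :
    |u| / 3 ≤ |(u - sin u) / (1 - cos u)| := by
  rcases lt_trichotomy u 0 with hneg | rfl | hpos
  · have := div_three_le_sub_sin_div_one_sub_cos (neg_pos.2 hneg) (by rwa [abs_of_neg hneg] at hu)
    rw [sin_neg, cos_neg, show -u - -sin u = -(u - sin u) by ring, neg_div (1 - cos u)] at this
    rw [abs_of_neg hneg]
    exact this.trans (neg_le_abs _)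
  · simp
  · rw [abs_of_pos hpos] at hu ⊢
    exact (div_three_le_sub_sin_div_one_sub_cos hpos hu).trans (le_abs_self _)

lemma mul_abs_le_abs_H {H : ℝ → ℝ}
    (hH : ∀ s, s ≠ 0 →
      H s = (2 * π / (1 - cos (2 * π * s))) * (s - sin (2 * π * s) / (2 * π)))
    {s : ℝ} (hs : |s| < 1) : 2 * π / 3 * |s| ≤ |H s| := by
  rcases eq_or_ne s 0 with rfl | hs0
  · simp
  have hπ : 0 < 2 * π := two_pi_pos
  have hHs : H s = (2 * π * s - sin (2 * π * s)) / (1 - cos (2 * π * s)) := by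
    rw [hH s hs0, div_mul_eq_mul_div, mul_sub, mul_div_cancel₀ _ hπ.ne']
  have := abs_div_three_le_abs_sub_sin_div_one_sub_cos (u := 2 * π * s)
    (by rw [abs_mul, abs_of_pos hπ]; nlinarith)
  rw [abs_mul, abs_of_pos hπ] at this
  rw [hHs]
  linarith

lemma abs_Hinv_le {H Hinv : ℝ → ℝ}
    (hH : ∀ s, s ≠ 0 →
      H s = (2 * π / (1 - cos (2 * π * s))) * (s - sin (2 * π * s) / (2 * π)))
    (hHinvMem : ∀ t, Hinv t ∈ Ioo (-1 : ℝ) 1) (hHinv : ∀ t, H (Hinv t) = t) (t : ℝ) :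
    |Hinv t| ≤ 3 / (2 * π) * |t| := by
  have := mul_abs_le_abs_H hH (abs_lt.2 (hHinvMem t))
  rw [hHinv] at this
  rw [div_mul_eq_mul_div, le_div_iff₀ two_pi_pos]
  linarith

lemma abs_mul_sin_add_mul_cos_sub_le {ρ t y k : ℝ} (hρ : 0 ≤ ρ) (hy : |y| ≤ k * |t|) :
    |ρ * t * sin y + ρ * cos y - ρ| ≤ (k + k ^ 2 / 2) * (ρ * t ^ 2) := by
  have hsin : |ρ * t * sin y| ≤ k * (ρ * t ^ 2) := by
    calc |ρ * t * sin y| = ρ * |t| * |sin y| := by rw [abs_mul, abs_mul, abs_of_nonneg hρ]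
      _ ≤ ρ * |t| * (k * |t|) := by gcongr; exact abs_sin_le_abs.trans hy
      _ = k * (ρ * t ^ 2) := by rw [← sq_abs t]; ring
  have hcos : |ρ * cos y - ρ| ≤ k ^ 2 / 2 * (ρ * t ^ 2) := by
    have hy2 : y ^ 2 ≤ k ^ 2 * t ^ 2 := by
      rw [← sq_abs y, ← sq_abs t, ← mul_pow]
      exact pow_le_pow_left₀ (abs_nonneg y) hy 2
    rw [abs_of_nonpos (by nlinarith [cos_le_one y])]
    nlinarith [one_sub_sq_div_two_le_cos (x := y)]
  calc |ρ * t * sin y + ρ * cos y - ρ| ≤ |ρ * t * sin y| + |ρ * cos y - ρ| := by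
        rw [add_sub_assoc]; exact abs_add_le _ _
    _ ≤ (k + k ^ 2 / 2) * (ρ * t ^ 2) := by linarith

noncomputable def ccDist (Hinv : ℝ → ℝ) (x₁ x₂ x₃ : ℝ) : ℝ :=
  x₃ / √(x₁ ^ 2 + x₂ ^ 2) * sin (π * Hinv (x₃ / (x₁ ^ 2 + x₂ ^ 2))) +
    √(x₁ ^ 2 + x₂ ^ 2) * cos (π * Hinv (x₃ / (x₁ ^ 2 + x₂ ^ 2)))

lemma abs_ccDist_sub_sqrt_le {Hinv : ℝ → ℝ} {C : ℝ} (hC : ∀ t, |Hinv t| ≤ C * |t|)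
    (x₁ x₂ x₃ : ℝ) :
    |ccDist Hinv x₁ x₂ x₃ - √(x₁ ^ 2 + x₂ ^ 2)| ≤
      (π * C + (π * C) ^ 2 / 2) * (x₃ ^ 2 / √(x₁ ^ 2 + x₂ ^ 2) ^ 3) := by
  rw [ccDist]
  set ρ := √(x₁ ^ 2 + x₂ ^ 2)
  have hρ : 0 ≤ ρ := sqrt_nonneg _
  have hρ2 : x₁ ^ 2 + x₂ ^ 2 = ρ ^ 2 := (sq_sqrt (add_nonneg (sq_nonneg x₁) (sq_nonneg x₂))).symm
  set t := x₃ / (x₁ ^ 2 + x₂ ^ 2)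
  have hlin : x₃ / ρ = ρ * t := by
    rcases hρ.eq_or_lt with h | h
    · simp [t, hρ2, ← h]
    · simp only [t, hρ2]
      field_simp
  have hquad : x₃ ^ 2 / ρ ^ 3 = ρ * t ^ 2 := by
    rcases hρ.eq_or_lt with h | h
    · simp [t, hρ2, ← h]
    · simp only [t, hρ2]
      field_simp
  rw [hlin, hquad]
  refine abs_mul_sin_add_mul_cos_sub_le hρ ?_
  rw [abs_mul, abs_of_pos pi_pos, mul_assoc]
  exact mul_le_mul_of_nonneg_left (hC t) pi_pos.le

lemma sqrt_sq_add_sub_le {x y : ℝ} (hx : 0 < x) (hy : 0 ≤ y) : √(x ^ 2 + y) - x ≤ y / x := by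
  have hyx : y / x * x = y := div_mul_cancel₀ y hx.ne'
  rw [sub_le_iff_le_add', sqrt_le_left (by positivity)]
  nlinarith [sq_nonneg (y / x)]

lemma abs_ccDist_sub_abs_le {Hinv : ℝ → ℝ} {C : ℝ} (hC : ∀ t, |Hinv t| ≤ C * |t|)
    {u : ℝ} (hu : u ≠ 0) (b c e : ℝ) :
    |(ccDist Hinv u b (c + e * u) - |u|)| ≤
      (π * C + (π * C) ^ 2 / 2) * ((|c| * |u|⁻¹ + |e|) ^ 2 * |u|⁻¹) + b ^ 2 * |u|⁻¹ := by
  have hC0 : 0 ≤ C := by simpa using (abs_nonneg _).trans (hC 1)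
  have hu' : 0 < |u| := abs_pos.2 hu
  set ρ := √(u ^ 2 + b ^ 2)
  have hρu : |u| ≤ ρ := abs_le_sqrt (le_add_of_nonneg_right (sq_nonneg b))
  have hρ : ρ - |u| ≤ b ^ 2 * |u|⁻¹ := by
    rw [← div_eq_mul_inv]
    simpa only [sq_abs] using sqrt_sq_add_sub_le hu' (sq_nonneg b)
  have hquad : (c + e * u) ^ 2 / ρ ^ 3 ≤ (|c| * |u|⁻¹ + |e|) ^ 2 * |u|⁻¹ := by
    have hnum : (c + e * u) ^ 2 ≤ (|c| + |e| * |u|) ^ 2 := by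
      rw [← sq_abs (c + e * u)]
      gcongr
      exact (abs_add_le _ _).trans_eq (by rw [abs_mul])
    calc (c + e * u) ^ 2 / ρ ^ 3 ≤ (|c| + |e| * |u|) ^ 2 / |u| ^ 3 := by gcongr
      _ = (|c| * |u|⁻¹ + |e|) ^ 2 * |u|⁻¹ := by field_simp
  have hdist := abs_ccDist_sub_sqrt_le hC u b (c + e * u)
  calc |(ccDist Hinv u b (c + e * u) - |u|)|
      ≤ |ccDist Hinv u b (c + e * u) - ρ| + |(ρ - |u|)| := abs_sub_le _ _ _
    _ ≤ _ := by
      rw [abs_of_nonneg (sub_nonneg.2 hρu)]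
      gcongr
      exact hdist.trans (by gcongr)

lemma tendsto_ccDist_sub_abs {Hinv : ℝ → ℝ} {C : ℝ} (hC : ∀ t, |Hinv t| ≤ C * |t|)
    (b c e : ℝ) :
    Tendsto (fun u => ccDist Hinv u b (c + e * u) - |u|) (cobounded ℝ) (𝓝 0) := by
  set K := π * C + (π * C) ^ 2 / 2
  have hinv : Tendsto (fun u : ℝ => |u|⁻¹) (cobounded ℝ) (𝓝 0) :=
    tendsto_norm_cobounded_atTop.inv_tendsto_atTop
  have hbound : Tendsto (fun u => K * ((|c| * |u|⁻¹ + |e|) ^ 2 * |u|⁻¹) + b ^ 2 * |u|⁻¹)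
      (cobounded ℝ) (𝓝 0) := by
    have hP : Continuous fun w : ℝ => K * ((|c| * w + |e|) ^ 2 * w) + b ^ 2 * w := by fun_prop
    simpa only [Function.comp_def, mul_zero, add_zero] using (hP.tendsto 0).comp hinv
  refine squeeze_zero_norm' ?_ hbound
  filter_upwards [eventually_ne_cobounded 0] with u hu
  exact abs_ccDist_sub_abs_le hC hu b c e

theorem heisenberg_busemann_limits_general
    (H : ℝ → ℝ)
    (hH : ∀ s, s ≠ 0 →
      H s = (2 * π / (1 - Real.cos (2 * π * s))) * (s - Real.sin (2 * π * s) / (2 * π)))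
    (Hinv : ℝ → ℝ) (hHinvMem : ∀ t, Hinv t ∈ Ioo (-1 : ℝ) 1)
    (hHinv : ∀ t, H (Hinv t) = t)
    (d₀ : ℝ → ℝ → ℝ → ℝ)
    (hd₀ : ∀ x₁ x₂ x₃ : ℝ, ¬(x₁ = 0 ∧ x₂ = 0) →
      d₀ x₁ x₂ x₃ =
        x₃ / Real.sqrt (x₁ ^ 2 + x₂ ^ 2) *
            Real.sin (π * Hinv (x₃ / (x₁ ^ 2 + x₂ ^ 2))) +
          Real.sqrt (x₁ ^ 2 + x₂ ^ 2) *
            Real.cos (π * Hinv (x₃ / (x₁ ^ 2 + x₂ ^ 2))))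
    (z₁ z₂ z₃ : ℝ) :
    Tendsto (fun s => d₀ (z₁ - s) z₂ (z₃ - 2 * z₂ * s) - s) atTop (nhds (-z₁)) ∧
      Tendsto (fun s => d₀ (z₁ - s) z₂ (z₃ - 2 * z₂ * s) - |s|) atBot (nhds z₁) := by
  have hlim : Tendsto (fun s => ccDist Hinv (z₁ - s) z₂ (z₃ - 2 * z₂ * s) - |z₁ - s|)
      (cobounded ℝ) (𝓝 0) := by
    refine ((tendsto_ccDist_sub_abs (abs_Hinv_le hH hHinvMem hHinv) z₂ (z₃ - 2 * z₂ * z₁)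
      (2 * z₂)).comp (tendsto_const_sub_cobounded z₁)).congr fun s => ?_
    rw [Function.comp_apply, show z₃ - 2 * z₂ * z₁ + 2 * z₂ * (z₁ - s) = z₃ - 2 * z₂ * s by ring]
  have hd (s : ℝ) (hs : s ≠ z₁) :
      d₀ (z₁ - s) z₂ (z₃ - 2 * z₂ * s) = ccDist Hinv (z₁ - s) z₂ (z₃ - 2 * z₂ * s) :=
    hd₀ _ _ _ fun h => hs (sub_eq_zero.1 h.1).symm
  constructor
  · have := (hlim.mono_left IsOrderBornology.atTop_le_cobounded).sub_const z₁
    rw [zero_sub] at this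
    refine this.congr' ?_
    filter_upwards [eventually_gt_atTop z₁] with s hs
    rw [hd s hs.ne', abs_of_neg (sub_neg.2 hs)]
    ring
  · have := (hlim.mono_left IsOrderBornology.atBot_le_cobounded).add_const z₁
    rw [zero_add] at this
    refine this.congr' ?_
    filter_upwards [eventually_lt_atBot (min 0 z₁)] with s hs
    rw [lt_min_iff] at hs
    rw [hd s hs.2.ne, abs_of_pos (sub_pos.2 hs.2), abs_of_neg hs.1]
    ring

/-- Busemann-function limits along the horizontal line `γ(s) = (s,0,0)` in the Heisenberg
group `ℍ¹`: with `d₀` the Hajłasz–Zimmerman formula for the Carnot–Carathéodory distance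
from the origin, `d₀((-γ(s))·z) - |s| → ∓z₁` as `s → ±∞`. -/
theorem heisenberg_busemann_limits
    (H : ℝ → ℝ)
    (hH : ∀ s, s ≠ 0 →
      H s = (2 * π / (1 - Real.cos (2 * π * s))) * (s - Real.sin (2 * π * s) / (2 * π)))
    (hH0 : H 0 = 0)
    (Hinv : ℝ → ℝ) (hHinvMem : ∀ t, Hinv t ∈ Ioo (-1 : ℝ) 1)
    (hHinv : ∀ t, H (Hinv t) = t)
    (d₀ : ℝ → ℝ → ℝ → ℝ)
    (hd₀ : ∀ x₁ x₂ x₃ : ℝ, ¬(x₁ = 0 ∧ x₂ = 0) →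
      d₀ x₁ x₂ x₃ =
        x₃ / Real.sqrt (x₁ ^ 2 + x₂ ^ 2) *
            Real.sin (π * Hinv (x₃ / (x₁ ^ 2 + x₂ ^ 2))) +
          Real.sqrt (x₁ ^ 2 + x₂ ^ 2) *
            Real.cos (π * Hinv (x₃ / (x₁ ^ 2 + x₂ ^ 2))))
    (z₁ z₂ z₃ : ℝ) :
    Tendsto (fun s => d₀ (z₁ - s) z₂ (z₃ - 2 * z₂ * s) - s) atTop (nhds (-z₁)) ∧
      Tendsto (fun s => d₀ (z₁ - s) z₂ (z₃ - 2 * z₂ * s) - |s|) atBot (nhds z₁) :=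
  heisenberg_busemann_limits_general H hH Hinv hHinvMem hHinv d₀ hd₀ z₁ z₂ z₃
end
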